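/- arXiv:1606.06256 — 7 statements merged into one kernel-verified Lean document; each statement's English description precedes it below -/
import Mathlib

section
/- Let x⋆ be a critical point with criticality threshold Γ(x⋆). If Γ(x⋆) < γ_g, then x⋆ is Γ(x⋆)-critical. -/
/-!
Criticality of `x` at `γ` says `g x ≤ ⟪∇f x, z - x⟫ + ‖z - x‖² / (2γ) + g z` for every `z`. For
fixed `z` this is a condition `a ≤ q / (2γ)` with `q ≥ 0`, and if it holds for every `γ` in a set
it holds at the supremum of that set; intersecting over `z`, the threshold `Γ(x)` is critical.
-/

open Set Filter Topology

/-- The majorizing model `ℓ_γ(z; x) = f(x) + ⟨∇f(x), z−x⟩ + ‖z−x‖²/(2γ) + g(z)`. -/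
noncomputable def linQ {n : ℕ} (f : EuclideanSpace ℝ (Fin n) → ℝ)
    (f' : EuclideanSpace ℝ (Fin n) → EuclideanSpace ℝ (Fin n))
    (g : EuclideanSpace ℝ (Fin n) → EReal) (γ : ℝ)
    (x z : EuclideanSpace ℝ (Fin n)) : EReal :=
  ((f x + (inner ℝ (f' x) (z - x) : ℝ) + ‖z - x‖ ^ 2 / (2 * γ) : ℝ) : EReal) + g z

/-- The forward-backward operator `T_γ(x)`: the set of minimizers of `z ↦ ℓ_γ(z; x)`. -/
noncomputable def Tset {n : ℕ} (f : EuclideanSpace ℝ (Fin n) → ℝ)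
    (f' : EuclideanSpace ℝ (Fin n) → EuclideanSpace ℝ (Fin n))
    (g : EuclideanSpace ℝ (Fin n) → EReal) (γ : ℝ)
    (x : EuclideanSpace ℝ (Fin n)) : Set (EuclideanSpace ℝ (Fin n)) :=
  {z | ∀ w, linQ f f' g γ x z ≤ linQ f f' g γ x w}

/-- The forward-backward envelope `φ_γ(x) = inf_z ℓ_γ(z; x)`. -/
noncomputable def fbe {n : ℕ} (f : EuclideanSpace ℝ (Fin n) → ℝ)
    (f' : EuclideanSpace ℝ (Fin n) → EuclideanSpace ℝ (Fin n))
    (g : EuclideanSpace ℝ (Fin n) → EReal) (γ : ℝ)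
    (x : EuclideanSpace ℝ (Fin n)) : EReal :=
  ⨅ z, linQ f f' g γ x z

/-- `g + ‖·‖²/(2γ)` is bounded below by a real constant. -/
def ProxBddBelow {n : ℕ} (g : EuclideanSpace ℝ (Fin n) → EReal) (γ : ℝ) : Prop :=
  ∃ c : ℝ, ∀ z, (c : EReal) ≤ g z + ((‖z‖ ^ 2 / (2 * γ) : ℝ) : EReal)

/-- `g` is proper: not identically `⊤`, and never `⊥`. -/
def ProperFn {n : ℕ} (g : EuclideanSpace ℝ (Fin n) → EReal) : Prop :=
  (∃ x, g x ≠ ⊤) ∧ ∀ x, g x ≠ ⊥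

/-- The criticality threshold `Γ(x) = sup({γ > 0 : x ∈ T_γ(x)} ∪ {0})`. -/
noncomputable def critThresh {n : ℕ} (f : EuclideanSpace ℝ (Fin n) → ℝ)
    (f' : EuclideanSpace ℝ (Fin n) → EuclideanSpace ℝ (Fin n))
    (g : EuclideanSpace ℝ (Fin n) → EReal)
    (x : EuclideanSpace ℝ (Fin n)) : ℝ :=
  sSup ({γ : ℝ | 0 < γ ∧ x ∈ Tset f f' g γ x} ∪ {0})

/-- When `S` is unbounded above, `sSup (S ∪ {0})` is the junk value `0` and the claim still
holds because `q / 0 = 0`; when `0 < a`, the hypothesis itself bounds `S` by `q / (2 * a)`. -/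
theorem le_div_two_mul_sSup_union_zero {S : Set ℝ} (hS : S.Nonempty) (hpos : ∀ γ ∈ S, 0 < γ)
    {a q : ℝ} (hq : 0 ≤ q) (h : ∀ γ ∈ S, a ≤ q / (2 * γ)) :
    a ≤ q / (2 * sSup (S ∪ {0})) := by
  set Γ := sSup (S ∪ {0})
  rcases le_or_gt a 0 with ha | ha
  · have hΓ : 0 ≤ Γ := Real.sSup_nonneg fun γ hγ => hγ.elim (fun hγ => (hpos γ hγ).le) (·.ge)
    exact ha.trans (by positivity)
  have hbound : ∀ γ ∈ S ∪ {0}, γ ≤ q / (2 * a) := by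
    rintro γ (hγ | rfl)
    · have := (le_div_iff₀ (by linarith [hpos γ hγ])).mp (h γ hγ)
      rw [le_div_iff₀ (by positivity)]
      linarith
    · positivity
  obtain ⟨γ₀, hγ₀⟩ := hS
  have hΓpos : 0 < Γ := (hpos γ₀ hγ₀).trans_le (le_csSup ⟨_, hbound⟩ (Or.inl hγ₀))
  have hΓle : Γ * (2 * a) ≤ q := (le_div_iff₀ (by positivity)).mp (csSup_le ⟨0, Or.inr rfl⟩ hbound)
  rw [le_div_iff₀ (by positivity)]
  linarith

theorem EReal.le_coe_add_of_forall_le_coe_add {ι : Type*} {s : Set ι} (hs : s.Nonempty)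
    {φ : ι → ℝ} {r : ℝ} (hr : ∀ a, (∀ i ∈ s, a ≤ φ i) → a ≤ r) {L y : EReal}
    (h : ∀ i ∈ s, L ≤ (φ i : EReal) + y) : L ≤ (r : EReal) + y := by
  obtain ⟨i₀, hi₀⟩ := hs
  induction y using EReal.rec with
  | bot => simpa using h i₀ hi₀
  | top => simp
  | coe y =>
    induction L using EReal.rec with
    | bot => exact bot_le
    | top => exact absurd (h i₀ hi₀) (by simp [← EReal.coe_add])
    | coe ℓ =>
      simp only [← EReal.coe_add, EReal.coe_le_coe_iff] at h ⊢
      linarith [hr (ℓ - y) fun i hi => by linarith [h i hi]]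

theorem linQ_self {n : ℕ} (f : EuclideanSpace ℝ (Fin n) → ℝ)
    (f' : EuclideanSpace ℝ (Fin n) → EuclideanSpace ℝ (Fin n))
    (g : EuclideanSpace ℝ (Fin n) → EReal) (γ : ℝ) (x : EuclideanSpace ℝ (Fin n)) :
    linQ f f' g γ x x = (f x : EReal) + g x := by
  simp [linQ]

theorem stmt6_general {n : ℕ} (f : EuclideanSpace ℝ (Fin n) → ℝ)
    (f' : EuclideanSpace ℝ (Fin n) → EuclideanSpace ℝ (Fin n))
    (g : EuclideanSpace ℝ (Fin n) → EReal)
    (γg : ℝ)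
    (xs : EuclideanSpace ℝ (Fin n))
    (hcrit : ∃ γ ∈ Set.Ioo (0 : ℝ) γg, xs ∈ Tset f f' g γ xs) :
    xs ∈ Tset f f' g (critThresh f f' g xs) xs := by
  obtain ⟨γ₀, ⟨hγ₀, -⟩, hγ₀crit⟩ := hcrit
  set S := {γ : ℝ | 0 < γ ∧ xs ∈ Tset f f' g γ xs}
  have hS : S.Nonempty := ⟨γ₀, hγ₀, hγ₀crit⟩
  intro w
  rw [linQ_self]
  set c := f xs + inner ℝ (f' xs) (w - xs)
  refine EReal.le_coe_add_of_forall_le_coe_add (φ := fun γ => c + ‖w - xs‖ ^ 2 / (2 * γ)) hS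
    (fun a ha => ?_) fun γ hγ => linQ_self f f' g γ xs ▸ hγ.2 w
  have := le_div_two_mul_sSup_union_zero hS (fun γ hγ => hγ.1) (sq_nonneg _)
    (a := a - c) fun γ hγ => sub_le_iff_le_add'.mpr (ha γ hγ)
  exact sub_le_iff_le_add'.mp this

theorem stmt6 {n : ℕ} (f : EuclideanSpace ℝ (Fin n) → ℝ)
    (f' : EuclideanSpace ℝ (Fin n) → EuclideanSpace ℝ (Fin n))
    (hgrad : ∀ x, HasGradientAt f (f' x) x)
    (Lf : ℝ) (hlip : LipschitzWith (Real.toNNReal Lf) f')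
    (g : EuclideanSpace ℝ (Fin n) → EReal)
    (hproper : ProperFn g) (hlsc : LowerSemicontinuous g)
    (γg : ℝ)
    (hpb : ∀ γ' ∈ Set.Ioo (0 : ℝ) γg, ProxBddBelow g γ')
    (hpb' : ∀ γ' : ℝ, γg < γ' → ¬ ProxBddBelow g γ')
    (xs : EuclideanSpace ℝ (Fin n))
    (hcrit : ∃ γ ∈ Set.Ioo (0 : ℝ) γg, xs ∈ Tset f f' g γ xs)
    (hΓ : critThresh f f' g xs < γg) :
    xs ∈ Tset f f' g (critThresh f f' g xs) xs :=
  stmt6_general f f' g γg xs hcrit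
end

section
/- If x⋆ is γ-critical with respect to the decomposition φ = f + g and h ∈ C^{1,1}(ℝⁿ) with L_h-Lipschitz gradient, then x⋆ is γ̃-critical with respect to the decomposition φ = (f − h) + (g + h), where γ̃ = γ/(1 + γ L_h). -/
open Set Filter Topology

/-! The descent lemma `h x + ⟪∇h x, z - x⟫ - L/2 ‖z - x‖² ≤ h z` says that moving `h` from `f`
to `g` while raising the quadratic weight from `1/γ` to `1/γ + L` can only increase the model
`ℓ(z; x)`. At `z = x` the two models agree, so a minimizer at `x` stays a minimizer. -/

section Descent

variable {E : Type*} [NormedAddCommGroup E] [InnerProductSpace ℝ E]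

theorem HasGradientAt.hasDerivAt_comp_add_smul [CompleteSpace E] {h : E → ℝ} {x d g : E} {t : ℝ}
    (hgrad : HasGradientAt h g (x + t • d)) :
    HasDerivAt (fun t : ℝ => h (x + t • d)) (inner ℝ g d) t := by
  have hline : HasDerivAt (fun t : ℝ => x + t • d) d t := by
    simpa using ((hasDerivAt_id t).smul_const d).const_add x
  simpa [Function.comp_def] using hgrad.hasFDerivAt.comp_hasDerivAt t hline

theorem LipschitzWith.neg_mul_le_inner_sub {h' : E → E} {K : NNReal} (hlip : LipschitzWith K h')
    (x d : E) {t : ℝ} (ht : 0 ≤ t) :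
    -(K * t * ‖d‖ ^ 2) ≤ inner ℝ (h' (x + t • d) - h' x) d := by
  have hdist : ‖h' (x + t • d) - h' x‖ ≤ K * (t * ‖d‖) := by
    simpa [dist_eq_norm, norm_smul, abs_of_nonneg ht] using hlip.dist_le_mul (x + t • d) x
  calc -(K * t * ‖d‖ ^ 2) = -(K * (t * ‖d‖) * ‖d‖) := by ring
    _ ≤ -(‖h' (x + t • d) - h' x‖ * ‖d‖) := by gcongr
    _ ≤ inner ℝ (h' (x + t • d) - h' x) d := neg_le_of_abs_le (abs_real_inner_le_norm _ _)

theorem le_of_hasGradientAt_of_lipschitzWith [CompleteSpace E] {h : E → ℝ} {h' : E → E}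
    {K : NNReal} (hgrad : ∀ x, HasGradientAt h (h' x) x) (hlip : LipschitzWith K h') (x y : E) :
    h x + inner ℝ (h' x) (y - x) - K / 2 * ‖y - x‖ ^ 2 ≤ h y := by
  set d := y - x
  -- `ψ 0 ≤ ψ 1` is the claim, and `ψ' ≥ 0` on `[0, 1]` because `h'` is `K`-Lipschitz.
  let ψ : ℝ → ℝ := fun t => h (x + t • d) - t * inner ℝ (h' x) d + K / 2 * t ^ 2 * ‖d‖ ^ 2
  have hψ : ∀ t, HasDerivAt ψ
      (inner ℝ (h' (x + t • d)) d - inner ℝ (h' x) d + K * t * ‖d‖ ^ 2) t := by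
    intro t
    refine (((hgrad (x + t • d)).hasDerivAt_comp_add_smul.sub
      ((hasDerivAt_id t).mul_const (inner ℝ (h' x) d))).add
      (((hasDerivAt_pow 2 t).const_mul ((K : ℝ) / 2)).mul_const (‖d‖ ^ 2))).congr_deriv ?_
    simp only [one_mul, Nat.cast_ofNat]
    ring
  have hmono : MonotoneOn ψ (Icc 0 1) := by
    refine monotoneOn_of_hasDerivWithinAt_nonneg (convex_Icc 0 1)
      (fun t _ => (hψ t).continuousAt.continuousWithinAt) (fun t _ => (hψ t).hasDerivWithinAt) ?_
    intro t ht
    rw [interior_Icc] at ht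
    have := hlip.neg_mul_le_inner_sub x d ht.1.le
    rw [inner_sub_left] at this
    linarith
  have h01 := hmono (left_mem_Icc.2 zero_le_one) (right_mem_Icc.2 zero_le_one) zero_le_one
  simp only [ψ, zero_smul, add_zero, zero_mul, one_smul, one_mul, one_pow, sub_zero] at h01
  rw [show x + d = y by simp [d]] at h01
  linarith

end Descent

section Model

variable {n : ℕ} {f h : EuclideanSpace ℝ (Fin n) → ℝ}
  {f' h' : EuclideanSpace ℝ (Fin n) → EuclideanSpace ℝ (Fin n)}
  {g : EuclideanSpace ℝ (Fin n) → EReal} {x : EuclideanSpace ℝ (Fin n)}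

theorem linQ_sub_add_self (γ γ' : ℝ) :
    linQ (fun y => f y - h y) (fun y => f' y - h' y) (fun z => g z + ((h z : ℝ) : EReal)) γ' x x
      = linQ f f' g γ x x := by
  simp only [linQ, sub_self, inner_zero_right, norm_zero]
  rw [add_comm (g x), ← add_assoc, ← EReal.coe_add]
  ring_nf

theorem linQ_le_linQ_sub_add {γ L : ℝ} (hγ : 0 < γ) (hL : 0 ≤ L) {z : EuclideanSpace ℝ (Fin n)}
    (hdesc : h x + inner ℝ (h' x) (z - x) - L / 2 * ‖z - x‖ ^ 2 ≤ h z) :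
    linQ f f' g γ x z ≤ linQ (fun y => f y - h y) (fun y => f' y - h' y)
      (fun z => g z + ((h z : ℝ) : EReal)) (γ / (1 + γ * L)) x z := by
  have hstep : ‖z - x‖ ^ 2 / (2 * (γ / (1 + γ * L)))
      = ‖z - x‖ ^ 2 / (2 * γ) + L / 2 * ‖z - x‖ ^ 2 := by
    field_simp
  have hreal : f x + inner ℝ (f' x) (z - x) + ‖z - x‖ ^ 2 / (2 * γ)
      ≤ f x - h x + inner ℝ (f' x - h' x) (z - x) + ‖z - x‖ ^ 2 / (2 * (γ / (1 + γ * L)))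
        + h z := by
    rw [hstep, inner_sub_left]
    linarith
  simp only [linQ]
  rw [add_comm (g z), ← add_assoc, ← EReal.coe_add]
  gcongr

end Model

theorem stmt10_general {n : ℕ} (f h : EuclideanSpace ℝ (Fin n) → ℝ)
    (f' h' : EuclideanSpace ℝ (Fin n) → EuclideanSpace ℝ (Fin n))
    (hgradh : ∀ x, HasGradientAt h (h' x) x)
    (Lh : ℝ) (hLh : 0 ≤ Lh) (hliph : LipschitzWith (Real.toNNReal Lh) h')
    (g : EuclideanSpace ℝ (Fin n) → EReal)
    (γ : ℝ) (hγ : 0 < γ)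
    (xs : EuclideanSpace ℝ (Fin n)) (hxs : xs ∈ Tset f f' g γ xs) :
    xs ∈ Tset (fun y => f y - h y) (fun y => f' y - h' y)
        (fun z => g z + ((h z : ℝ) : EReal)) (γ / (1 + γ * Lh)) xs := by
  intro w
  have hdesc := le_of_hasGradientAt_of_lipschitzWith hgradh hliph xs w
  rw [Real.coe_toNNReal Lh hLh] at hdesc
  calc _ = linQ f f' g γ xs xs := linQ_sub_add_self γ _
    _ ≤ linQ f f' g γ xs w := hxs w
    _ ≤ _ := linQ_le_linQ_sub_add hγ hLh hdesc

theorem stmt10 {n : ℕ} (f h : EuclideanSpace ℝ (Fin n) → ℝ)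
    (f' h' : EuclideanSpace ℝ (Fin n) → EuclideanSpace ℝ (Fin n))
    (hgradf : ∀ x, HasGradientAt f (f' x) x)
    (hgradh : ∀ x, HasGradientAt h (h' x) x)
    (Lh : ℝ) (hLh : 0 ≤ Lh) (hliph : LipschitzWith (Real.toNNReal Lh) h')
    (g : EuclideanSpace ℝ (Fin n) → EReal)
    (hproper : ProperFn g)
    (γ : ℝ) (hγ : 0 < γ)
    (xs : EuclideanSpace ℝ (Fin n)) (hxs : xs ∈ Tset f f' g γ xs) :
    xs ∈ Tset (fun y => f y - h y) (fun y => f' y - h' y)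
        (fun z => g z + ((h z : ℝ) : EReal)) (γ / (1 + γ * Lh)) xs :=
  stmt10_general f h f' h' hgradh Lh hLh hliph g γ hγ xs hxs
end

section
/- For every γ ∈ (0, γ_g), every x ∈ ℝⁿ and every x̄ ∈ T_γ(x), it holds that φ(x̄) ≤ φ_γ(x) − ((1 − γ L_f)/(2γ))‖x − x̄‖², where φ = f + g. -/
open Set Filter Topology

/-! The descent lemma bounds `f x̄` by the linearization of `f` at `x` plus `(L_f/2)‖x̄ - x‖²`.
Since `x̄` minimizes `ℓ_γ(·; x)`, `φ_γ(x) = ℓ_γ(x̄; x)`, and the difference of the two quadratic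
terms is exactly `(1 - γ L_f)/(2γ) ‖x - x̄‖²`. -/

section
variable {E : Type*} [NormedAddCommGroup E] [InnerProductSpace ℝ E] [CompleteSpace E]
  {f : E → ℝ} {f' : E → E}

theorem hasDerivAt_comp_add_smul_of_hasGradientAt (hgrad : ∀ z, HasGradientAt f (f' z) z)
    (x v : E) (t : ℝ) :
    HasDerivAt (fun s : ℝ => f (x + s • v)) (inner ℝ (f' (x + t • v)) v) t := by
  have hline : HasDerivAt (fun s : ℝ => x + s • v) v t := by
    simpa using ((hasDerivAt_id t).smul_const v).const_add x
  exact (hgrad (x + t • v)).hasFDerivAt.comp_hasDerivAt t hline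

theorem apply_le_add_inner_add_of_lipschitzWith_gradient (hgrad : ∀ z, HasGradientAt f (f' z) z)
    {L : NNReal} (hlip : LipschitzWith L f') (x y : E) :
    f y ≤ f x + inner ℝ (f' x) (y - x) + L / 2 * ‖y - x‖ ^ 2 := by
  set v := y - x
  have hderiv := hasDerivAt_comp_add_smul_of_hasGradientAt hgrad x v
  have hbound (t : ℝ) :
      HasDerivAt (fun s : ℝ => f x + s * inner ℝ (f' x) v + L / 2 * s ^ 2 * ‖v‖ ^ 2)
        (inner ℝ (f' x) v + L * t * ‖v‖ ^ 2) t := by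
    refine ((((hasDerivAt_id t).mul_const (inner ℝ (f' x) v)).const_add (f x)).add
      (((hasDerivAt_pow 2 t).const_mul (L / 2 : ℝ)).mul_const (‖v‖ ^ 2))).congr_deriv ?_
    ring
  have hslope : ∀ t ∈ Ico (0 : ℝ) 1,
      inner ℝ (f' (x + t • v)) v ≤ inner ℝ (f' x) v + L * t * ‖v‖ ^ 2 := by
    rintro t ⟨ht, -⟩
    have hlip_t : ‖f' (x + t • v) - f' x‖ ≤ L * (t * ‖v‖) := by
      simpa [dist_eq_norm, norm_smul, abs_of_nonneg ht] using hlip.dist_le_mul (x + t • v) x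
    calc inner ℝ (f' (x + t • v)) v
        = inner ℝ (f' x) v + inner ℝ (f' (x + t • v) - f' x) v := by
          rw [inner_sub_left]; ring
      _ ≤ inner ℝ (f' x) v + ‖f' (x + t • v) - f' x‖ * ‖v‖ := by
          gcongr; exact real_inner_le_norm _ _
      _ ≤ inner ℝ (f' x) v + L * (t * ‖v‖) * ‖v‖ := by gcongr
      _ = inner ℝ (f' x) v + L * t * ‖v‖ ^ 2 := by ring
  have := image_le_of_deriv_right_le_deriv_boundary
    (fun t _ => (hderiv t).continuousAt.continuousWithinAt)
    (fun t _ => (hderiv t).hasDerivWithinAt) (by simp)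
    (fun t _ => (hbound t).continuousAt.continuousWithinAt)
    (fun t _ => (hbound t).hasDerivWithinAt) hslope (right_mem_Icc.2 zero_le_one)
  simpa [v] using this
end

theorem EReal.coe_add_le_coe_add_sub_coe {a b c : ℝ} (h : a + c ≤ b) (e : EReal) :
    (a : EReal) + e ≤ (b : EReal) + e - c := by
  rw [sub_eq_add_neg, add_right_comm, ← EReal.coe_neg, ← EReal.coe_add]
  gcongr
  exact_mod_cast le_add_neg_iff_add_le.2 h

theorem fbe_eq_linQ_of_mem_Tset {n : ℕ} {f : EuclideanSpace ℝ (Fin n) → ℝ}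
    {f' : EuclideanSpace ℝ (Fin n) → EuclideanSpace ℝ (Fin n)}
    {g : EuclideanSpace ℝ (Fin n) → EReal} {γ : ℝ} {x z : EuclideanSpace ℝ (Fin n)}
    (hz : z ∈ Tset f f' g γ x) : fbe f f' g γ x = linQ f f' g γ x z :=
  le_antisymm (iInf_le _ z) (le_iInf hz)

theorem stmt13_general {n : ℕ} (f : EuclideanSpace ℝ (Fin n) → ℝ)
    (f' : EuclideanSpace ℝ (Fin n) → EuclideanSpace ℝ (Fin n))
    (hgrad : ∀ x, HasGradientAt f (f' x) x)
    (Lf : ℝ) (hLf : 0 ≤ Lf) (hlip : LipschitzWith (Real.toNNReal Lf) f')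
    (g : EuclideanSpace ℝ (Fin n) → EReal)
    (γg : ℝ)
    (γ : ℝ) (hγ : γ ∈ Set.Ioo (0 : ℝ) γg)
    (x xb : EuclideanSpace ℝ (Fin n)) (hxb : xb ∈ Tset f f' g γ x) :
    ((f xb : ℝ) : EReal) + g xb ≤
      fbe f f' g γ x - (((1 - γ * Lf) / (2 * γ) * ‖x - xb‖ ^ 2 : ℝ) : EReal) := by
  have hdesc := apply_le_add_inner_add_of_lipschitzWith_gradient hgrad hlip x xb
  rw [Real.coe_toNNReal _ hLf] at hdesc
  rw [fbe_eq_linQ_of_mem_Tset hxb, linQ]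
  refine EReal.coe_add_le_coe_add_sub_coe ?_ (g xb)
  have hquad : (1 - γ * Lf) / (2 * γ) * ‖x - xb‖ ^ 2
      = ‖xb - x‖ ^ 2 / (2 * γ) - Lf / 2 * ‖xb - x‖ ^ 2 := by
    rw [norm_sub_rev]
    field_simp [hγ.1.ne']
  linarith

theorem stmt13 {n : ℕ} (f : EuclideanSpace ℝ (Fin n) → ℝ)
    (f' : EuclideanSpace ℝ (Fin n) → EuclideanSpace ℝ (Fin n))
    (hgrad : ∀ x, HasGradientAt f (f' x) x)
    (Lf : ℝ) (hLf : 0 ≤ Lf) (hlip : LipschitzWith (Real.toNNReal Lf) f')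
    (g : EuclideanSpace ℝ (Fin n) → EReal)
    (hproper : ProperFn g) (hlsc : LowerSemicontinuous g)
    (γg : ℝ) (hpb : ∀ γ' ∈ Set.Ioo (0 : ℝ) γg, ProxBddBelow g γ')
    (γ : ℝ) (hγ : γ ∈ Set.Ioo (0 : ℝ) γg)
    (x xb : EuclideanSpace ℝ (Fin n)) (hxb : xb ∈ Tset f f' g γ x) :
    ((f xb : ℝ) : EReal) + g xb ≤
      fbe f f' g γ x - (((1 - γ * Lf) / (2 * γ) * ‖x - xb‖ ^ 2 : ℝ) : EReal) :=
  stmt13_general f f' hgrad Lf hLf hlip g γg γ hγ x xb hxb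
end

section
/- For every γ ∈ (0, min{1/L_f, γ_g}), inf φ_γ = inf φ and argmin φ_γ = argmin φ. -/
open Set Filter Topology

lemma LowerSemicontinuousAt.le_of_iInf_add_sq_dist_le {E : Type*} [PseudoMetricSpace E]
    {h : E → EReal} {x : E} {m c : ℝ} (hx : LowerSemicontinuousAt h x) (hc : 0 < c)
    (hm : ∀ z, (m : EReal) ≤ h z) (hinf : ⨅ z, h z + ((c * dist z x ^ 2 : ℝ) : EReal) ≤ m) :
    h x ≤ m := by
  by_contra! hlt
  obtain ⟨b, hmb, hbx⟩ := exists_between hlt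
  obtain ⟨ρ, hρ, hball⟩ := Metric.eventually_nhds_iff.mp (hx b hbx)
  have hpen : ∀ z, (0 : EReal) ≤ ((c * dist z x ^ 2 : ℝ) : EReal) := fun z => by
    exact_mod_cast by positivity
  have hbound :
      min b ((m + c * ρ ^ 2 : ℝ) : EReal) ≤ ⨅ z, h z + ((c * dist z x ^ 2 : ℝ) : EReal) := by
    refine le_iInf fun z => ?_
    rcases lt_or_ge (dist z x) ρ with hnear | hfar
    · exact (min_le_left _ _).trans ((hball hnear).le.trans (le_add_of_nonneg_right (hpen z)))
    · refine (min_le_right _ _).trans ?_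
      rw [EReal.coe_add]
      gcongr
      exact hm z
  have hm_lt : (m : EReal) < ((m + c * ρ ^ 2 : ℝ) : EReal) := by
    exact_mod_cast lt_add_of_pos_right m (by positivity)
  exact (lt_min hmb hm_lt).not_ge (hbound.trans hinf)

lemma le_add_inner_add_sq_of_lipschitzWith_gradient {E : Type*} [NormedAddCommGroup E]
    [InnerProductSpace ℝ E] [CompleteSpace E] {f : E → ℝ} {f' : E → E} {L : NNReal}
    (hf : ∀ x, HasGradientAt f (f' x) x) (hf' : LipschitzWith L f') (x y : E) :
    f y ≤ f x + inner ℝ (f' x) (y - x) + L / 2 * ‖y - x‖ ^ 2 := by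
  set v := y - x
  let u : ℝ → ℝ := fun t => f (x + t • v) - t * inner ℝ (f' x) v - L / 2 * t ^ 2 * ‖v‖ ^ 2
  have hu : ∀ t, HasDerivAt u
      (inner ℝ (f' (x + t • v)) v - inner ℝ (f' x) v - L * t * ‖v‖ ^ 2) t := by
    intro t
    have hline : HasDerivAt (fun t : ℝ => x + t • v) v t := by
      simpa using ((hasDerivAt_id t).smul_const v).const_add x
    have hcomp := (hf (x + t • v)).hasFDerivAt.comp_hasDerivAt t hline
    simp only [InnerProductSpace.toDual_apply_apply] at hcomp
    have hquad : HasDerivAt (fun t : ℝ => L / 2 * t ^ 2 * ‖v‖ ^ 2) (L * t * ‖v‖ ^ 2) t := by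
      refine (((hasDerivAt_pow 2 t).const_mul (L / 2 : ℝ)).mul_const (‖v‖ ^ 2)).congr_deriv ?_
      push_cast; ring
    exact (hcomp.sub (hasDerivAt_mul_const _)).sub hquad
  have hslope : ∀ t, 0 ≤ t →
      inner ℝ (f' (x + t • v)) v - inner ℝ (f' x) v ≤ L * t * ‖v‖ ^ 2 := by
    intro t ht
    calc inner ℝ (f' (x + t • v)) v - inner ℝ (f' x) v
        = inner ℝ (f' (x + t • v) - f' x) v := (inner_sub_left _ _ _).symm
      _ ≤ ‖f' (x + t • v) - f' x‖ * ‖v‖ := real_inner_le_norm _ _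
      _ ≤ L * ‖t • v‖ * ‖v‖ := by
          gcongr
          simpa [dist_eq_norm] using hf'.dist_le_mul (x + t • v) x
      _ = L * t * ‖v‖ ^ 2 := by rw [norm_smul, Real.norm_of_nonneg ht]; ring
  have hanti : AntitoneOn u (Ici 0) :=
    antitoneOn_of_hasDerivWithinAt_nonpos (convex_Ici 0)
      (fun t _ => (hu t).continuousAt.continuousWithinAt)
      (fun t _ => (hu t).hasDerivWithinAt)
      (fun t ht => by
        rw [interior_Ici] at ht
        linarith [hslope t (le_of_lt ht)])
  have hu₀ : u 0 = f x := by simp [u]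
  have hu₁ : u 1 = f y - inner ℝ (f' x) v - L / 2 * ‖v‖ ^ 2 := by simp [u, v]
  linarith [hanti self_mem_Ici (mem_Ici.mpr zero_le_one) zero_le_one]

lemma ContinuousAt.lowerSemicontinuousAt_coe_add {α : Type*} [TopologicalSpace α]
    {f : α → ℝ} {g : α → EReal} {x : α} (hf : ContinuousAt f x) (hg : LowerSemicontinuousAt g x) :
    LowerSemicontinuousAt (fun z => (f z : EReal) + g z) x :=
  (continuous_coe_real_ereal.continuousAt.comp hf).lowerSemicontinuousAt.add' hg
    (EReal.continuousAt_add (.inl (EReal.coe_ne_top _)) (.inl (EReal.coe_ne_bot _)))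

section linQ

variable {n : ℕ} {f : EuclideanSpace ℝ (Fin n) → ℝ}
  {f' : EuclideanSpace ℝ (Fin n) → EuclideanSpace ℝ (Fin n)}
  {g : EuclideanSpace ℝ (Fin n) → EReal} {γ : ℝ}

lemma ProperFn.exists_iInf_coe_add_eq_coe (hg : ProperFn g)
    (hmin : ∃ xs, ∀ z, (f xs : EReal) + g xs ≤ (f z : EReal) + g z) :
    ∃ M : ℝ, ⨅ z, (f z : EReal) + g z = M := by
  obtain ⟨xs, hxs⟩ := hmin
  obtain ⟨x₀, hx₀⟩ := hg.1
  refine ⟨((f xs : EReal) + g xs).toReal, ?_⟩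
  rw [le_antisymm (iInf_le _ xs) (le_iInf hxs), EReal.coe_toReal]
  · exact ((hxs x₀).trans_lt (EReal.add_lt_top (EReal.coe_ne_top _) hx₀)).ne
  · simp [EReal.add_eq_bot_iff, hg.2 xs]

lemma fbe_le (x : EuclideanSpace ℝ (Fin n)) : fbe f f' g γ x ≤ (f x : EReal) + g x :=
  iInf_le_of_le x (by simp [linQ])

lemma add_sq_dist_le_linQ {L : NNReal} (hf : ∀ x, HasGradientAt f (f' x) x)
    (hf' : LipschitzWith L f') (x z : EuclideanSpace ℝ (Fin n)) :
    (f z : EReal) + g z + (((1 / (2 * γ) - L / 2) * dist z x ^ 2 : ℝ) : EReal) ≤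
      linQ f f' g γ x z := by
  have hdescent := le_add_inner_add_sq_of_lipschitzWith_gradient hf hf' x z
  rw [linQ, add_right_comm, ← EReal.coe_add, dist_eq_norm]
  refine add_le_add_left (EReal.coe_le_coe_iff.mpr ?_) _
  linarith [show ‖z - x‖ ^ 2 / (2 * γ) = 1 / (2 * γ) * ‖z - x‖ ^ 2 by ring]

end linQ

theorem stmt15_general {n : ℕ} (f : EuclideanSpace ℝ (Fin n) → ℝ)
    (f' : EuclideanSpace ℝ (Fin n) → EuclideanSpace ℝ (Fin n))
    (hgrad : ∀ x, HasGradientAt f (f' x) x)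
    (Lf : ℝ) (hLf : 0 < Lf) (hlip : LipschitzWith (Real.toNNReal Lf) f')
    (g : EuclideanSpace ℝ (Fin n) → EReal)
    (hproper : ProperFn g) (hlsc : LowerSemicontinuous g)
    (γg : ℝ)
    (hargmin : ∃ xs : EuclideanSpace ℝ (Fin n),
      ∀ z, ((f xs : ℝ) : EReal) + g xs ≤ ((f z : ℝ) : EReal) + g z)
    (γ : ℝ) (hγ : γ ∈ Set.Ioo (0 : ℝ) (min (1 / Lf) γg)) :
    (⨅ x, fbe f f' g γ x) = (⨅ x, ((f x : ℝ) : EReal) + g x) ∧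
      {x | ∀ z, fbe f f' g γ x ≤ fbe f f' g γ z} =
        {x | ∀ z, ((f x : ℝ) : EReal) + g x ≤ ((f z : ℝ) : EReal) + g z} := by
  set φ : EuclideanSpace ℝ (Fin n) → EReal := fun x => (f x : EReal) + g x
  set c : ℝ := 1 / (2 * γ) - Lf / 2
  have hc : 0 < c := by
    have hγL : γ * Lf < 1 := (lt_div_iff₀ hLf).mp (by simpa using hγ.2.trans_le (min_le_left _ _))
    rw [sub_pos, div_lt_div_iff₀ (by norm_num) (by linarith [hγ.1])]
    linarith
  have hmaj : ∀ x z, φ z + ((c * dist z x ^ 2 : ℝ) : EReal) ≤ linQ f f' g γ x z := by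
    simpa [c, Real.coe_toNNReal _ hLf.le] using add_sq_dist_le_linQ hgrad hlip
  have hle_fbe : ∀ x, ⨅ z, φ z ≤ fbe f f' g γ x := fun x =>
    iInf_mono fun z => (le_add_of_nonneg_right (by exact_mod_cast by positivity)).trans (hmaj x z)
  have hinf : ⨅ x, fbe f f' g γ x = ⨅ x, φ x :=
    le_antisymm (iInf_mono fbe_le) (le_iInf hle_fbe)
  obtain ⟨M, hM⟩ := hproper.exists_iInf_coe_add_eq_coe hargmin
  refine ⟨hinf, ?_⟩
  ext x
  simp only [mem_ofPred_eq, ← le_iInf_iff, hinf]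
  refine ⟨fun hx => ?_, fun hx => (fbe_le x).trans hx⟩
  rw [hM] at hx ⊢
  have hφ : LowerSemicontinuousAt φ x :=
    (hgrad x).hasFDerivAt.continuousAt.lowerSemicontinuousAt_coe_add (hlsc x)
  exact hφ.le_of_iInf_add_sq_dist_le hc (fun z => hM ▸ iInf_le φ z) ((iInf_mono (hmaj x)).trans hx)

theorem stmt15 {n : ℕ} (f : EuclideanSpace ℝ (Fin n) → ℝ)
    (f' : EuclideanSpace ℝ (Fin n) → EuclideanSpace ℝ (Fin n))
    (hgrad : ∀ x, HasGradientAt f (f' x) x)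
    (Lf : ℝ) (hLf : 0 < Lf) (hlip : LipschitzWith (Real.toNNReal Lf) f')
    (g : EuclideanSpace ℝ (Fin n) → EReal)
    (hproper : ProperFn g) (hlsc : LowerSemicontinuous g)
    (γg : ℝ) (hpb : ∀ γ' ∈ Set.Ioo (0 : ℝ) γg, ProxBddBelow g γ')
    (hargmin : ∃ xs : EuclideanSpace ℝ (Fin n),
      ∀ z, ((f xs : ℝ) : EReal) + g xs ≤ ((f z : ℝ) : EReal) + g z)
    (γ : ℝ) (hγ : γ ∈ Set.Ioo (0 : ℝ) (min (1 / Lf) γg)) :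
    (⨅ x, fbe f f' g γ x) = (⨅ x, ((f x : ℝ) : EReal) + g x) ∧
      {x | ∀ z, fbe f f' g γ x ≤ fbe f f' g γ z} =
        {x | ∀ z, ((f x : ℝ) : EReal) + g x ≤ ((f z : ℝ) : EReal) + g z} :=
  stmt15_general f f' hgrad Lf hLf hlip g hproper hlsc γg hargmin γ hγ
end

section
/- For any γ ∈ (0, γ_g), the forward-backward envelope φ_γ is a real-valued, locally Lipschitz (strictly continuous) function on ℝⁿ. -/
/-!
Completing the square in `ℓ_γ(z; x)` gives `φ_γ(x) = f(x) - (γ/2)‖∇f(x)‖² + g^γ(x - γ∇f(x))`,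
where `g^γ(y) = inf_z g(z) + ‖z - y‖²/(2γ)` is the Moreau envelope; since `f` is `C¹` and `∇f` is
Lipschitz, it suffices that `g^γ` is real-valued and locally Lipschitz. Prox-boundedness at some
`γ' ∈ (γ, γ_g)` bounds every term `g(z) + ‖z - y‖²/(2γ)` below by a coercive quadratic in
`‖z - y‖`. Hence `g^γ` is finite, and near-minimizers for `y` in a unit ball stay within a fixed
distance `K` of `y`; evaluating such a near-minimizer at another point `y'` of the ball gives
`g^γ(y') ≤ g^γ(y) + ε + (K + 1)/γ ‖y' - y‖`.
-/

open Set Filter Topology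

theorem EReal.coe_add_iInf {ι : Sort*} (a : ℝ) (u : ι → EReal) :
    (a : EReal) + ⨅ i, u i = ⨅ i, ((a : EReal) + u i) := by
  have le_iInf_add (b : ℝ) (v : ι → EReal) : (b : EReal) + ⨅ i, v i ≤ ⨅ i, ((b : EReal) + v i) :=
    le_iInf fun i => add_le_add_right (iInf_le v i) _
  have cancel (t : EReal) : ((-a : ℝ) : EReal) + ((a : EReal) + t) = t := by
    rw [← add_assoc, ← EReal.coe_add, neg_add_cancel, EReal.coe_zero, zero_add]
  refine le_antisymm (le_iInf_add a u) ?_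
  calc ⨅ i, ((a : EReal) + u i)
      = (a : EReal) + (((-a : ℝ) : EReal) + ⨅ i, ((a : EReal) + u i)) := by
        rw [← add_assoc, ← EReal.coe_add, add_neg_cancel, EReal.coe_zero, zero_add]
    _ ≤ (a : EReal) + ⨅ i, u i := by
        gcongr
        simpa only [cancel] using le_iInf_add (-a) fun i => (a : EReal) + u i

theorem exists_forall_le_of_mul_sq_sub_mul_le {α : ℝ} (hα : 0 < α) (B M : ℝ) :
    ∃ K, ∀ s, α * s ^ 2 - B * s ≤ M → s ≤ K := by
  refine ⟨1 + (|B| + |M|) / α, fun s hs => ?_⟩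
  rcases le_or_gt s 1 with hs1 | hs1
  · linarith [div_nonneg (add_nonneg (abs_nonneg B) (abs_nonneg M)) hα.le]
  · have : α * s ≤ |B| + |M| := by
      nlinarith [le_abs_self B, le_abs_self M, abs_nonneg M]
    linarith [(le_div_iff₀' hα).2 this]

theorem norm_sub_sq_le_norm_sub_sq_add {E : Type*} [SeminormedAddCommGroup E] (z y y' : E) :
    ‖z - y'‖ ^ 2 ≤ ‖z - y‖ ^ 2 + (2 * ‖z - y‖ + ‖y' - y‖) * ‖y' - y‖ := by
  have htri : ‖z - y'‖ ≤ ‖z - y‖ + ‖y' - y‖ := by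
    simpa only [norm_sub_rev y y'] using norm_sub_le_norm_sub_add_norm_sub z y y'
  nlinarith [norm_nonneg (z - y'), norm_nonneg (z - y), norm_nonneg (y' - y)]

theorem inner_add_norm_sub_sq_div_eq {E : Type*} [NormedAddCommGroup E] [InnerProductSpace ℝ E]
    {γ : ℝ} (hγ : γ ≠ 0) (v x z : E) :
    inner ℝ v (z - x) + ‖z - x‖ ^ 2 / (2 * γ) =
      ‖z - (x - γ • v)‖ ^ 2 / (2 * γ) - γ / 2 * ‖v‖ ^ 2 := by
  rw [show z - (x - γ • v) = (z - x) + γ • v by abel, norm_add_sq_real, inner_smul_right,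
    norm_smul, Real.norm_eq_abs, mul_pow, sq_abs, real_inner_comm]
  field_simp
  ring

section MoreauEnvelope

variable {E : Type*} [SeminormedAddCommGroup E] {g : E → EReal} {γ γ' c : ℝ}

noncomputable def moreauEnv (g : E → EReal) (γ : ℝ) (y : E) : EReal :=
  ⨅ z, g z + ((‖z - y‖ ^ 2 / (2 * γ) : ℝ) : EReal)

theorem ne_bot_of_forall_coe_le (hc : ∀ z, (c : EReal) ≤ g z + ((‖z‖ ^ 2 / (2 * γ') : ℝ) : EReal))
    (z : E) : g z ≠ ⊥ := by
  intro hz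
  have := hc z
  rw [hz, EReal.bot_add] at this
  exact EReal.coe_ne_bot c (le_bot_iff.1 this)

theorem coe_le_add_norm_sub_sq_div (hγ : 0 < γ) (hγγ' : γ < γ')
    (hc : ∀ z, (c : EReal) ≤ g z + ((‖z‖ ^ 2 / (2 * γ') : ℝ) : EReal)) (y z : E) :
    ((c - ‖y‖ ^ 2 / (2 * γ') + (1 / (2 * γ) - 1 / (2 * γ')) * ‖z - y‖ ^ 2
        - ‖y‖ / γ' * ‖z - y‖ : ℝ) : EReal) ≤ g z + ((‖z - y‖ ^ 2 / (2 * γ) : ℝ) : EReal) := by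
  have hγ' : 0 < γ' := hγ.trans hγγ'
  set D := ‖z - y‖ ^ 2 / (2 * γ) - ‖z‖ ^ 2 / (2 * γ')
  have hz : ‖z‖ ^ 2 / (2 * γ') ≤ (‖z - y‖ + ‖y‖) ^ 2 / (2 * γ') := by
    gcongr
    simpa only [add_comm] using norm_le_norm_add_norm_sub' z y
  have hexpand : (‖z - y‖ + ‖y‖) ^ 2 / (2 * γ') =
      ‖z - y‖ ^ 2 / (2 * γ') + ‖y‖ / γ' * ‖z - y‖ + ‖y‖ ^ 2 / (2 * γ') := by
    field_simp
    ring
  have hsplit : ‖z - y‖ ^ 2 / (2 * γ) = (1 / (2 * γ) - 1 / (2 * γ')) * ‖z - y‖ ^ 2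
      + ‖z - y‖ ^ 2 / (2 * γ') := by
    field_simp
    ring
  calc _ ≤ ((c + D : ℝ) : EReal) := EReal.coe_le_coe_iff.2 (by linarith)
    _ = (c : EReal) + (D : EReal) := EReal.coe_add _ _
    _ ≤ g z + ((‖z‖ ^ 2 / (2 * γ') : ℝ) : EReal) + (D : EReal) := by gcongr; exact hc z
    _ = g z + ((‖z - y‖ ^ 2 / (2 * γ) : ℝ) : EReal) := by
        rw [add_assoc, ← EReal.coe_add, add_sub_cancel]

theorem moreauEnv_ne_bot (hγ : 0 < γ) (hγγ' : γ < γ')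
    (hc : ∀ z, (c : EReal) ≤ g z + ((‖z‖ ^ 2 / (2 * γ') : ℝ) : EReal)) (y : E) :
    moreauEnv g γ y ≠ ⊥ := by
  set α := 1 / (2 * γ) - 1 / (2 * γ')
  have hα : 0 < α := sub_pos.2 (by gcongr)
  set B := ‖y‖ / γ'
  refine ne_bot_of_le_ne_bot (EReal.coe_ne_bot (c - ‖y‖ ^ 2 / (2 * γ') - B ^ 2 / (4 * α)))
    (le_iInf fun z => le_trans ?_ (coe_le_add_norm_sub_sq_div hγ hγγ' hc y z))
  refine EReal.coe_le_coe_iff.2 ?_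
  have : -(B ^ 2 / (4 * α)) ≤ α * ‖z - y‖ ^ 2 - B * ‖z - y‖ := by
    rw [neg_le, le_div_iff₀ (by positivity)]
    nlinarith [sq_nonneg (2 * α * ‖z - y‖ - B)]
  linarith

theorem moreauEnv_ne_top {z₀ : E} (hz₀ : g z₀ ≠ ⊤) (y : E) : moreauEnv g γ y ≠ ⊤ :=
  ne_top_of_le_ne_top (EReal.add_lt_top hz₀ (EReal.coe_ne_top _)).ne (iInf_le _ z₀)

section RealValued

variable {e : E → ℝ} (he : ∀ y, moreauEnv g γ y = e y)
include he

theorem le_add_norm_sub_sq_div_of_moreauEnv_eq {z y : E} {r : ℝ} (hz : g z = r) :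
    e y ≤ r + ‖z - y‖ ^ 2 / (2 * γ) := by
  have := iInf_le (fun z => g z + ((‖z - y‖ ^ 2 / (2 * γ) : ℝ) : EReal)) z
  rwa [← moreauEnv, he, hz, ← EReal.coe_add, EReal.coe_le_coe_iff] at this

theorem exists_lt_add_of_moreauEnv_eq (hg : ∀ z, g z ≠ ⊥) (y : E) {ε : ℝ} (hε : 0 < ε) :
    ∃ z, ∃ r : ℝ, g z = r ∧ r + ‖z - y‖ ^ 2 / (2 * γ) < e y + ε := by
  have hlt : moreauEnv g γ y < ((e y + ε : ℝ) : EReal) := by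
    rw [he]; exact EReal.coe_lt_coe_iff.2 (by linarith)
  obtain ⟨z, hz⟩ := iInf_lt_iff.1 hlt
  have htop : g z ≠ ⊤ := fun h => by simp [h] at hz
  refine ⟨z, (g z).toReal, (EReal.coe_toReal htop (hg z)).symm, ?_⟩
  rwa [← EReal.coe_toReal htop (hg z), ← EReal.coe_add, EReal.coe_lt_coe_iff] at hz

theorem exists_forall_norm_sub_le_of_moreauEnv_eq (hγ : 0 < γ) (hγγ' : γ < γ')
    (hc : ∀ z, (c : EReal) ≤ g z + ((‖z‖ ^ 2 / (2 * γ') : ℝ) : EReal))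
    {z₀ : E} {r₀ : ℝ} (hz₀ : g z₀ = r₀) (y₀ : E) :
    ∃ K, ∀ y ∈ Metric.closedBall y₀ 1, ∀ z, ∀ r : ℝ, g z = r →
      r + ‖z - y‖ ^ 2 / (2 * γ) ≤ e y + 1 → ‖z - y‖ ≤ K := by
  have hγ' : 0 < γ' := hγ.trans hγγ'
  have hα : 0 < 1 / (2 * γ) - 1 / (2 * γ') := sub_pos.2 (by gcongr)
  obtain ⟨K, hK⟩ := exists_forall_le_of_mul_sq_sub_mul_le hα ((‖y₀‖ + 1) / γ')
    (r₀ + (‖z₀ - y₀‖ + 1) ^ 2 / (2 * γ) + 1 - c + (‖y₀‖ + 1) ^ 2 / (2 * γ'))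
  refine ⟨K, fun y hy z r hz hr => hK _ ?_⟩
  rw [Metric.mem_closedBall, dist_eq_norm] at hy
  have hy₀ : ‖y‖ ≤ ‖y₀‖ + 1 := by linarith [norm_le_norm_add_norm_sub' y y₀]
  have hz₀y : ‖z₀ - y‖ ≤ ‖z₀ - y₀‖ + 1 := by
    linarith [norm_sub_le_norm_sub_add_norm_sub z₀ y₀ y, norm_sub_rev y₀ y]
  have hupper : e y ≤ r₀ + (‖z₀ - y₀‖ + 1) ^ 2 / (2 * γ) :=
    (le_add_norm_sub_sq_div_of_moreauEnv_eq he hz₀).trans (by gcongr)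
  have hlower := (coe_le_add_norm_sub_sq_div hγ hγγ' hc y z).trans_eq
    (by rw [hz, ← EReal.coe_add])
  rw [EReal.coe_le_coe_iff] at hlower
  have hB : ‖y‖ / γ' * ‖z - y‖ ≤ (‖y₀‖ + 1) / γ' * ‖z - y‖ := by gcongr
  have hy₀sq : ‖y‖ ^ 2 / (2 * γ') ≤ (‖y₀‖ + 1) ^ 2 / (2 * γ') := by gcongr
  linarith

theorem locallyLipschitz_of_moreauEnv_eq (hγ : 0 < γ) (hγγ' : γ < γ')
    (hc : ∀ z, (c : EReal) ≤ g z + ((‖z‖ ^ 2 / (2 * γ') : ℝ) : EReal))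
    (hdom : ∃ z, g z ≠ ⊤) : LocallyLipschitz e := by
  have hg := ne_bot_of_forall_coe_le hc
  obtain ⟨z₀, hz₀⟩ := hdom
  intro y₀
  obtain ⟨K, hK⟩ := exists_forall_norm_sub_le_of_moreauEnv_eq he hγ hγγ' hc
    (EReal.coe_toReal hz₀ (hg z₀)).symm y₀
  refine ⟨Real.toNNReal ((K + 1) / γ), Metric.closedBall y₀ 1,
    Metric.closedBall_mem_nhds y₀ one_pos,
    LipschitzOnWith.of_le_add_mul' _ fun y' hy' y hy => le_of_forall_pos_le_add fun ε hε => ?_⟩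
  obtain ⟨z, r, hz, hr⟩ := exists_lt_add_of_moreauEnv_eq he hg y (lt_min hε one_pos)
  have hzy : ‖z - y‖ ≤ K := hK y hy z r hz (by linarith [min_le_right ε 1])
  have hy'y : ‖y' - y‖ ≤ 2 := by
    rw [← dist_eq_norm]
    linarith [dist_triangle_right y' y y₀, Metric.mem_closedBall.1 hy, Metric.mem_closedBall.1 hy']
  have hsq : ‖z - y'‖ ^ 2 ≤ ‖z - y‖ ^ 2 + (2 * K + 2) * ‖y' - y‖ :=
    (norm_sub_sq_le_norm_sub_sq_add z y y').trans (by gcongr)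
  have hstep : ‖z - y'‖ ^ 2 / (2 * γ) ≤ ‖z - y‖ ^ 2 / (2 * γ) + (K + 1) / γ * dist y' y := by
    rw [dist_eq_norm, show (K + 1) / γ * ‖y' - y‖ = (2 * K + 2) * ‖y' - y‖ / (2 * γ) by
      field_simp, ← add_div]
    gcongr
  linarith [le_add_norm_sub_sq_div_of_moreauEnv_eq he hz (y := y'), min_le_left ε 1]

end RealValued

theorem exists_moreauEnv_eq_coe_and_locallyLipschitz (hγ : 0 < γ) (hγγ' : γ < γ')
    (hc : ∀ z, (c : EReal) ≤ g z + ((‖z‖ ^ 2 / (2 * γ') : ℝ) : EReal)) (hdom : ∃ z, g z ≠ ⊤) :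
    ∃ e : E → ℝ, (∀ y, moreauEnv g γ y = e y) ∧ LocallyLipschitz e := by
  obtain ⟨z₀, hz₀⟩ := hdom
  have he (y : E) : moreauEnv g γ y = (moreauEnv g γ y).toReal :=
    (EReal.coe_toReal (moreauEnv_ne_top hz₀ y) (moreauEnv_ne_bot hγ hγγ' hc y)).symm
  exact ⟨_, he, locallyLipschitz_of_moreauEnv_eq he hγ hγγ' hc ⟨z₀, hz₀⟩⟩

end MoreauEnvelope

theorem locallyLipschitz_of_forall_hasGradientAt {E : Type*} [NormedAddCommGroup E]
    [InnerProductSpace ℝ E] [CompleteSpace E] {f : E → ℝ} {f' : E → E}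
    (hf : ∀ x, HasGradientAt f (f' x) x) (hf' : Continuous f') : LocallyLipschitz f :=
  (contDiff_one_iff_hasFDerivAt.2 ⟨_, (InnerProductSpace.toDual ℝ E).continuous.comp hf',
    fun x => (hf x).hasFDerivAt⟩).locallyLipschitz

theorem fbe_eq_coe_add_moreauEnv {n : ℕ} (f : EuclideanSpace ℝ (Fin n) → ℝ)
    (f' : EuclideanSpace ℝ (Fin n) → EuclideanSpace ℝ (Fin n))
    (g : EuclideanSpace ℝ (Fin n) → EReal) {γ : ℝ} (hγ : γ ≠ 0) (x : EuclideanSpace ℝ (Fin n)) :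
    fbe f f' g γ x = ((f x - γ / 2 * ‖f' x‖ ^ 2 : ℝ) : EReal) + moreauEnv g γ (x - γ • f' x) := by
  rw [moreauEnv, EReal.coe_add_iInf]
  refine iInf_congr fun z => ?_
  rw [linQ, add_comm (g z), ← add_assoc, ← EReal.coe_add, add_assoc (f x),
    inner_add_norm_sub_sq_div_eq hγ]
  congr 2
  ring

theorem stmt16_general {n : ℕ} (f : EuclideanSpace ℝ (Fin n) → ℝ)
    (f' : EuclideanSpace ℝ (Fin n) → EuclideanSpace ℝ (Fin n))
    (hgrad : ∀ x, HasGradientAt f (f' x) x)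
    (Lf : ℝ) (hlip : LipschitzWith (Real.toNNReal Lf) f')
    (g : EuclideanSpace ℝ (Fin n) → EReal)
    (hproper : ProperFn g)
    (γg : ℝ) (hpb : ∀ γ' ∈ Set.Ioo (0 : ℝ) γg, ProxBddBelow g γ')
    (γ : ℝ) (hγ : γ ∈ Set.Ioo (0 : ℝ) γg) :
    ∃ F : EuclideanSpace ℝ (Fin n) → ℝ,
      (∀ x, fbe f f' g γ x = ((F x : ℝ) : EReal)) ∧ LocallyLipschitz F := by
  obtain ⟨hγ0, hγγg⟩ := hγ
  obtain ⟨γ', hγγ', hγ'γg⟩ := exists_between hγγg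
  obtain ⟨c, hc⟩ := hpb γ' ⟨hγ0.trans hγγ', hγ'γg⟩
  obtain ⟨e, he, he_lip⟩ := exists_moreauEnv_eq_coe_and_locallyLipschitz hγ0 hγγ' hc hproper.1
  refine ⟨fun x => f x - γ / 2 * ‖f' x‖ ^ 2 + e (x - γ • f' x), fun x => ?_, ?_⟩
  · rw [fbe_eq_coe_add_moreauEnv f f' g hγ0.ne', he, ← EReal.coe_add]
  have hf := locallyLipschitz_of_forall_hasGradientAt hgrad hlip.continuous
  have hsq : LocallyLipschitz fun x => γ / 2 * ‖f' x‖ ^ 2 :=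
    (contDiff_const.mul (contDiff_norm_sq ℝ)).locallyLipschitz.comp hlip.locallyLipschitz
  have hstep : LocallyLipschitz fun x => x - γ • f' x :=
    LocallyLipschitz.id.sub ((lipschitzWith_smul γ).comp hlip).locallyLipschitz
  exact (hf.sub hsq).add (he_lip.comp hstep)

theorem stmt16 {n : ℕ} (f : EuclideanSpace ℝ (Fin n) → ℝ)
    (f' : EuclideanSpace ℝ (Fin n) → EuclideanSpace ℝ (Fin n))
    (hgrad : ∀ x, HasGradientAt f (f' x) x)
    (Lf : ℝ) (hlip : LipschitzWith (Real.toNNReal Lf) f')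
    (g : EuclideanSpace ℝ (Fin n) → EReal)
    (hproper : ProperFn g) (hlsc : LowerSemicontinuous g)
    (γg : ℝ) (hpb : ∀ γ' ∈ Set.Ioo (0 : ℝ) γg, ProxBddBelow g γ')
    (γ : ℝ) (hγ : γ ∈ Set.Ioo (0 : ℝ) γg) :
    ∃ F : EuclideanSpace ℝ (Fin n) → ℝ,
      (∀ x, fbe f f' g γ x = ((F x : ℝ) : EReal)) ∧ LocallyLipschitz F :=
  stmt16_general f f' hgrad Lf hlip g hproper γg hpb γ hγ
end

section
/- (Square-summable residuals) In the ZeroFPR iteration, where x^{k+1} = x̄^k + τ_k d^k satisfies φ_γ(x^{k+1}) ≤ Φ̄_k − σ‖r^k‖², Φ̄_{k+1} = (1−p_k)Φ̄_k + p_k φ_γ(x^{k+1}) with p_k ∈ [p_min, 1], r^k = (x^k − x̄^k)/γ and x̄^k ∈ T_γ(x^k), one has Σ_{k≥0} ‖r^k‖² ≤ (Φ̄_0 − inf φ)/(σ p_min); in particular r^k → 0. -/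
/-!
Because `γ L_f < 1`, the descent lemma makes every model `ℓ_γ(·; x)` a majorant of `φ = f + g`,
so `φ_γ ≥ inf φ`. The averaged merit dominates the envelope, since
`Φ̄_{k+1} - φ_γ(x^{k+1}) = (1 - p_k)(Φ̄_k - φ_γ(x^{k+1})) ≥ 0`, and it decreases by at least
`σ p_min ‖r^k‖²` per step; the partial sums of `‖r^k‖²` therefore telescope against `Φ̄_0 - inf φ`.
-/

open Set Filter Topology

theorem le_add_inner_add_mul_sq_of_lipschitzWith_gradient {E : Type*} [NormedAddCommGroup E]
    [InnerProductSpace ℝ E] [CompleteSpace E] {f : E → ℝ} {f' : E → E} {K : NNReal}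
    (hgrad : ∀ x, HasGradientAt f (f' x) x) (hlip : LipschitzWith K f') (x y : E) :
    f y ≤ f x + inner ℝ (f' x) (y - x) + K / 2 * ‖y - x‖ ^ 2 := by
  set v := y - x
  have hpath : ∀ t : ℝ, HasDerivAt (fun s : ℝ => f (x + s • v)) (inner ℝ (f' (x + t • v)) v) t :=
    fun t => by
      have hline : HasDerivAt (fun s : ℝ => x + s • v) v t := by
        simpa using ((hasDerivAt_id t).smul_const v).const_add x
      simpa [Function.comp_def] using (hgrad (x + t • v)).hasFDerivAt.comp_hasDerivAt t hline
  have hbound : ∀ t : ℝ, 0 ≤ t →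
      inner ℝ (f' (x + t • v)) v ≤ inner ℝ (f' x) v + K * t * ‖v‖ ^ 2 := fun t ht =>
    calc inner ℝ (f' (x + t • v)) v
        = inner ℝ (f' x) v + inner ℝ (f' (x + t • v) - f' x) v := by
          rw [inner_sub_left]; ring
      _ ≤ inner ℝ (f' x) v + ‖f' (x + t • v) - f' x‖ * ‖v‖ := by
          gcongr; exact real_inner_le_norm _ _
      _ ≤ inner ℝ (f' x) v + K * ‖t • v‖ * ‖v‖ := by
          gcongr; simpa [dist_eq_norm] using hlip.dist_le_mul (x + t • v) x
      _ = inner ℝ (f' x) v + K * t * ‖v‖ ^ 2 := by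
          rw [norm_smul, Real.norm_of_nonneg ht]; ring
  have hmodel : ∀ t : ℝ, HasDerivAt
      (fun s : ℝ => f x + s * inner ℝ (f' x) v + K / 2 * s ^ 2 * ‖v‖ ^ 2)
      (inner ℝ (f' x) v + K * t * ‖v‖ ^ 2) t := fun t => by
    refine ((((hasDerivAt_id' t).mul_const (inner ℝ (f' x) v)).const_add (f x)).add
      (((hasDerivAt_pow 2 t).const_mul ((K : ℝ) / 2)).mul_const (‖v‖ ^ 2))).congr_deriv ?_
    push_cast; ring
  -- `t ↦ f (x + t • v)` starts at the value of its quadratic model and grows no faster on `[0, 1]`.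
  have h := image_le_of_deriv_right_le_deriv_boundary
    (fun t _ => (hpath t).continuousAt.continuousWithinAt) (fun t _ => (hpath t).hasDerivWithinAt)
    (by simp) (fun t _ => (hmodel t).continuousAt.continuousWithinAt)
    (fun t _ => (hmodel t).hasDerivWithinAt) (fun t ht => hbound t ht.1)
    (right_mem_Icc.mpr zero_le_one)
  simpa [v] using h

theorem add_le_linQ {n : ℕ} {f : EuclideanSpace ℝ (Fin n) → ℝ}
    {f' : EuclideanSpace ℝ (Fin n) → EuclideanSpace ℝ (Fin n)} {K : NNReal} {γ : ℝ}
    (hgrad : ∀ x, HasGradientAt f (f' x) x) (hlip : LipschitzWith K f')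
    (hγ : 0 < γ) (hKγ : K * γ ≤ 1) (g : EuclideanSpace ℝ (Fin n) → EReal)
    (y z : EuclideanSpace ℝ (Fin n)) :
    ((f z : ℝ) : EReal) + g z ≤ linQ f f' g γ y z := by
  have hquad : K / 2 * ‖z - y‖ ^ 2 ≤ ‖z - y‖ ^ 2 / (2 * γ) := by
    rw [le_div_iff₀ (by positivity)]
    nlinarith [sq_nonneg ‖z - y‖]
  have := le_add_inner_add_mul_sq_of_lipschitzWith_gradient hgrad hlip y z
  exact add_le_add_left (EReal.coe_le_coe_iff.mpr (by linarith)) _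

theorem coe_le_fbe {n : ℕ} {f : EuclideanSpace ℝ (Fin n) → ℝ}
    {f' : EuclideanSpace ℝ (Fin n) → EuclideanSpace ℝ (Fin n)} {K : NNReal} {γ : ℝ}
    (hgrad : ∀ x, HasGradientAt f (f' x) x) (hlip : LipschitzWith K f')
    (hγ : 0 < γ) (hKγ : K * γ ≤ 1) {g : EuclideanSpace ℝ (Fin n) → EReal} {m : ℝ}
    (hm : ∀ z, (m : EReal) ≤ ((f z : ℝ) : EReal) + g z) (y : EuclideanSpace ℝ (Fin n)) :
    (m : EReal) ≤ fbe f f' g γ y :=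
  le_iInf fun z => (hm z).trans (add_le_linQ hgrad hlip hγ hKγ g y z)

theorem summable_and_tsum_le_of_mul_le_sub_succ {a Φ : ℕ → ℝ} {c m : ℝ} (hc : 0 < c)
    (ha : ∀ k, 0 ≤ a k) (hΦm : ∀ k, m ≤ Φ k) (hdecr : ∀ k, c * a k ≤ Φ k - Φ (k + 1)) :
    Summable a ∧ ∑' k, a k ≤ (Φ 0 - m) / c := by
  have hpartial : ∀ N, ∑ k ∈ Finset.range N, a k ≤ (Φ 0 - m) / c := fun N => by
    rw [le_div_iff₀ hc, Finset.sum_mul]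
    calc ∑ k ∈ Finset.range N, a k * c
        ≤ ∑ k ∈ Finset.range N, (Φ k - Φ (k + 1)) :=
          Finset.sum_le_sum fun k _ => by linarith [hdecr k]
      _ = Φ 0 - Φ N := Finset.sum_range_sub' Φ N
      _ ≤ Φ 0 - m := by linarith [hΦm N]
  exact ⟨summable_of_sum_range_le ha hpartial, Real.tsum_le_of_sum_range_le ha hpartial⟩

section AveragedMerit

variable {F Φ p : ℕ → ℝ}

theorem le_averagedMerit (hΦ : ∀ k, Φ (k + 1) = (1 - p k) * Φ k + p k * F (k + 1))
    (hp : ∀ k, p k ≤ 1) (hΦ0 : Φ 0 = F 0) (hFΦ : ∀ k, F (k + 1) ≤ Φ k) (k : ℕ) :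
    F k ≤ Φ k := by
  cases k with
  | zero => exact hΦ0.ge
  | succ k =>
    rw [hΦ k]
    nlinarith [mul_nonneg (sub_nonneg.mpr (hp k)) (sub_nonneg.mpr (hFΦ k))]

theorem mul_le_averagedMerit_sub_succ (hΦ : ∀ k, Φ (k + 1) = (1 - p k) * Φ k + p k * F (k + 1))
    {pmin : ℝ} (hpmin : 0 ≤ pmin) (hp : ∀ k, pmin ≤ p k) {a : ℕ → ℝ} {σ : ℝ} (hσa : ∀ k, 0 ≤ σ * a k)
    (hdesc : ∀ k, F (k + 1) ≤ Φ k - σ * a k) (k : ℕ) :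
    σ * pmin * a k ≤ Φ k - Φ (k + 1) :=
  calc σ * pmin * a k = pmin * (σ * a k) := by ring
    _ ≤ p k * (Φ k - F (k + 1)) :=
      mul_le_mul (hp k) (by linarith [hdesc k]) (hσa k) (hpmin.trans (hp k))
    _ = Φ k - Φ (k + 1) := by rw [hΦ k]; ring

end AveragedMerit

theorem tendsto_zero_of_summable_norm_sq {E : Type*} [NormedAddCommGroup E] {r : ℕ → E}
    (hr : Summable fun k => ‖r k‖ ^ 2) : Tendsto r atTop (𝓝 0) := by
  rw [tendsto_zero_iff_norm_tendsto_zero]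
  simpa [Real.sqrt_sq (norm_nonneg _)] using hr.tendsto_atTop_zero.sqrt

theorem stmt18_general {n : ℕ} (f : EuclideanSpace ℝ (Fin n) → ℝ)
    (f' : EuclideanSpace ℝ (Fin n) → EuclideanSpace ℝ (Fin n))
    (hgrad : ∀ x, HasGradientAt f (f' x) x)
    (Lf : ℝ) (hlip : LipschitzWith (Real.toNNReal Lf) f')
    (g : EuclideanSpace ℝ (Fin n) → EReal)
    (γg : ℝ)
    (γ : ℝ) (hγ : γ ∈ Set.Ioo (0 : ℝ) (min (1 / Lf) γg))
    (σ : ℝ) (hσ : 0 < σ) (pmin : ℝ) (hpmin : 0 < pmin)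
    (F : EuclideanSpace ℝ (Fin n) → ℝ)
    (hF : ∀ y, fbe f f' g γ y = ((F y : ℝ) : EReal))
    (m : ℝ) (hm : ∀ z, (m : EReal) ≤ ((f z : ℝ) : EReal) + g z)
    (x r : ℕ → EuclideanSpace ℝ (Fin n)) (p Φ : ℕ → ℝ)
    (hLS : ∀ k, F (x (k + 1)) ≤ Φ k - σ * ‖r k‖ ^ 2)
    (hΦ0 : Φ 0 = F (x 0))
    (hΦ : ∀ k, Φ (k + 1) = (1 - p k) * Φ k + p k * F (x (k + 1)))
    (hp : ∀ k, p k ∈ Set.Icc pmin 1) :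
    Summable (fun k => ‖r k‖ ^ 2) ∧
      (∑' k, ‖r k‖ ^ 2) ≤ (Φ 0 - m) / (σ * pmin) ∧
      Filter.Tendsto r Filter.atTop (nhds 0) := by
  have hγL : γ < 1 / Lf := hγ.2.trans_le (min_le_left _ _)
  have hLf : 0 < Lf := one_div_pos.mp (hγ.1.trans hγL)
  have hLγ : (Lf.toNNReal : ℝ) * γ ≤ 1 := by
    rw [Real.coe_toNNReal _ hLf.le, mul_comm]
    exact ((lt_div_iff₀ hLf).mp hγL).le
  have hFm : ∀ y, m ≤ F y := fun y => by
    simpa [hF y] using coe_le_fbe hgrad hlip hγ.1 hLγ hm y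
  have hσr : ∀ k, 0 ≤ σ * ‖r k‖ ^ 2 := fun k => by positivity
  have hFΦ : ∀ k, F (x k) ≤ Φ k :=
    le_averagedMerit (F := fun k => F (x k)) hΦ (fun k => (hp k).2) hΦ0 fun k => by linarith [hLS k, hσr k]
  obtain ⟨hsum, htsum⟩ := summable_and_tsum_le_of_mul_le_sub_succ (mul_pos hσ hpmin)
    (fun k => sq_nonneg _) (fun k => (hFm _).trans (hFΦ k))
    (mul_le_averagedMerit_sub_succ (F := fun k => F (x k)) hΦ hpmin.le (fun k => (hp k).1) hσr hLS)
  exact ⟨hsum, htsum, tendsto_zero_of_summable_norm_sq hsum⟩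

theorem stmt18 {n : ℕ} (f : EuclideanSpace ℝ (Fin n) → ℝ)
    (f' : EuclideanSpace ℝ (Fin n) → EuclideanSpace ℝ (Fin n))
    (hgrad : ∀ x, HasGradientAt f (f' x) x)
    (Lf : ℝ) (hLf : 0 < Lf) (hlip : LipschitzWith (Real.toNNReal Lf) f')
    (g : EuclideanSpace ℝ (Fin n) → EReal)
    (hproper : ProperFn g) (hlsc : LowerSemicontinuous g)
    (γg : ℝ) (hpb : ∀ γ' ∈ Set.Ioo (0 : ℝ) γg, ProxBddBelow g γ')
    (γ : ℝ) (hγ : γ ∈ Set.Ioo (0 : ℝ) (min (1 / Lf) γg))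
    (σ : ℝ) (hσ : 0 < σ) (pmin : ℝ) (hpmin : 0 < pmin)
    (F : EuclideanSpace ℝ (Fin n) → ℝ)
    (hF : ∀ y, fbe f f' g γ y = ((F y : ℝ) : EReal))
    (m : ℝ) (hm : ∀ z, (m : EReal) ≤ ((f z : ℝ) : EReal) + g z)
    (x xb d r : ℕ → EuclideanSpace ℝ (Fin n)) (τ p Φ : ℕ → ℝ)
    (hxb : ∀ k, xb k ∈ Tset f f' g γ (x k))
    (hr : ∀ k, r k = γ⁻¹ • (x k - xb k))
    (hstep : ∀ k, x (k + 1) = xb k + τ k • d k)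
    (hLS : ∀ k, F (x (k + 1)) ≤ Φ k - σ * ‖r k‖ ^ 2)
    (hΦ0 : Φ 0 = F (x 0))
    (hΦ : ∀ k, Φ (k + 1) = (1 - p k) * Φ k + p k * F (x (k + 1)))
    (hp : ∀ k, p k ∈ Set.Icc pmin 1) :
    Summable (fun k => ‖r k‖ ^ 2) ∧
      (∑' k, ‖r k‖ ^ 2) ≤ (Φ 0 - m) / (σ * pmin) ∧
      Filter.Tendsto r Filter.atTop (nhds 0) :=
  stmt18_general f f' hgrad Lf hlip g γg γ hγ σ hσ pmin hpmin F hF m hm x r p Φ hLS hΦ0 hΦ hp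
end

section
/- If x^k → x′ along a subsequence, the corresponding residuals r^k = (x^k − x̄^k)/γ with x̄^k ∈ T_γ(x^k) converge to 0, and ∇f is continuous, then x′ is a fixed point of T_γ (i.e., x′ ∈ T_γ(x′)), by outer semicontinuity of the proximal mapping prox_{γg}. -/
open Set Filter Topology

/-! A limit `x'` of iterates `x^k` whose residuals vanish has `x̄^k → x'` as well, so `x' ∈ T_γ(x')`
follows once the graph of `T_γ` is closed. It is: `(x, z) ↦ ℓ_γ(z; x)` is lower semicontinuous and
`x ↦ ℓ_γ(w; x)` is continuous for every `w`, so each condition `ℓ_γ(z; x) ≤ ℓ_γ(w; x)` cuts out a closed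
set. -/

theorem isClosed_setOf_le_of_semicontinuous {α β : Type*} [TopologicalSpace α] [LinearOrder β]
    [DenselyOrdered β] {F G : α → β} (hF : LowerSemicontinuous F) (hG : UpperSemicontinuous G) :
    IsClosed {p | F p ≤ G p} := by
  refine isOpen_compl_iff.mp (isOpen_iff_mem_nhds.mpr fun p hp => ?_)
  obtain ⟨y, hGy, hyF⟩ := exists_between (not_le.mp hp)
  filter_upwards [hF p y hyF, hG p y hGy] with q hyFq hGyq
  exact not_le.mpr (hGyq.trans hyFq)

section ForwardBackward

variable {n : ℕ} (f : EuclideanSpace ℝ (Fin n) → ℝ)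
  (f' : EuclideanSpace ℝ (Fin n) → EuclideanSpace ℝ (Fin n))
  (g : EuclideanSpace ℝ (Fin n) → EReal) (γ : ℝ)

theorem Tset_eq_Tset_zero (x : EuclideanSpace ℝ (Fin n)) : Tset f f' g γ x = Tset 0 f' g γ x := by
  have hsplit : ∀ z, linQ f f' g γ x z = (f x : EReal) + linQ 0 f' g γ x z := fun z => by
    simp only [linQ, Pi.zero_apply, zero_add, ← add_assoc, ← EReal.coe_add]
  ext z
  simp only [Tset, mem_ofPred_eq, hsplit, (EReal.addLECancellable_coe (f x)).add_le_add_iff_left]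

variable {f f'}

theorem continuous_linQ_smoothPart (hf : Continuous f) (hf' : Continuous f') :
    Continuous fun p : EuclideanSpace ℝ (Fin n) × EuclideanSpace ℝ (Fin n) =>
      f p.1 + inner ℝ (f' p.1) (p.2 - p.1) + ‖p.2 - p.1‖ ^ 2 / (2 * γ) := by
  fun_prop

theorem lowerSemicontinuous_linQ (hf : Continuous f) (hf' : Continuous f')
    (hg : LowerSemicontinuous g) :
    LowerSemicontinuous fun p : EuclideanSpace ℝ (Fin n) × EuclideanSpace ℝ (Fin n) =>
      linQ f f' g γ p.1 p.2 :=
  (continuous_coe_real_ereal.comp (continuous_linQ_smoothPart γ hf hf')).lowerSemicontinuous.add'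
    (hg.comp continuous_snd) fun _ =>
      EReal.continuousAt_add (Or.inl (EReal.coe_ne_top _)) (Or.inl (EReal.coe_ne_bot _))

theorem upperSemicontinuous_linQ_fst (hf : Continuous f) (hf' : Continuous f')
    (w : EuclideanSpace ℝ (Fin n)) :
    UpperSemicontinuous fun p : EuclideanSpace ℝ (Fin n) × EuclideanSpace ℝ (Fin n) =>
      linQ f f' g γ p.1 w :=
  (continuous_coe_real_ereal.comp ((continuous_linQ_smoothPart γ hf hf').comp
      (continuous_fst.prodMk continuous_const))).upperSemicontinuous.add'
    upperSemicontinuous_const fun _ =>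
      EReal.continuousAt_add (Or.inl (EReal.coe_ne_top _)) (Or.inl (EReal.coe_ne_bot _))

theorem isClosed_graph_Tset (hf : Continuous f) (hf' : Continuous f')
    (hg : LowerSemicontinuous g) :
    IsClosed {p : EuclideanSpace ℝ (Fin n) × EuclideanSpace ℝ (Fin n) | p.2 ∈ Tset f f' g γ p.1} := by
  change IsClosed {p : EuclideanSpace ℝ (Fin n) × EuclideanSpace ℝ (Fin n) |
    ∀ w, linQ f f' g γ p.1 p.2 ≤ linQ f f' g γ p.1 w}
  rw [ofPred_forall]
  exact isClosed_iInter fun w => isClosed_setOf_le_of_semicontinuous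
    (lowerSemicontinuous_linQ g γ hf hf' hg) (upperSemicontinuous_linQ_fst g γ hf hf' w)

end ForwardBackward

theorem stmt19_general {n : ℕ} (f : EuclideanSpace ℝ (Fin n) → ℝ)
    (f' : EuclideanSpace ℝ (Fin n) → EuclideanSpace ℝ (Fin n))
    (Lf : ℝ) (hlip : LipschitzWith (Real.toNNReal Lf) f')
    (g : EuclideanSpace ℝ (Fin n) → EReal)
    (hlsc : LowerSemicontinuous g)
    (γg : ℝ)
    (γ : ℝ) (hγ : γ ∈ Set.Ioo (0 : ℝ) (min (1 / Lf) γg))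
    (x xb r : ℕ → EuclideanSpace ℝ (Fin n))
    (hxb : ∀ k, xb k ∈ Tset f f' g γ (x k))
    (hr : ∀ k, r k = γ⁻¹ • (x k - xb k))
    (φ : ℕ → ℕ)
    (x' : EuclideanSpace ℝ (Fin n))
    (hconv : Filter.Tendsto (fun k => x (φ k)) Filter.atTop (nhds x'))
    (hres : Filter.Tendsto (fun k => r (φ k)) Filter.atTop (nhds 0)) :
    x' ∈ Tset f f' g γ x' := by
  have hxb_eq : ∀ k, xb k = x k - γ • r k := fun k => by
    rw [hr k, smul_inv_smul₀ hγ.1.ne', sub_sub_cancel]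
  have hxb_conv : Tendsto (fun k => xb (φ k)) atTop (𝓝 x') := by
    simpa only [hxb_eq, smul_zero, sub_zero] using hconv.sub (hres.const_smul γ)
  simp only [Tset_eq_Tset_zero f] at hxb ⊢
  have hlimit := (isClosed_graph_Tset g γ continuous_zero hlip.continuous hlsc).mem_of_tendsto
    (hconv.prodMk_nhds hxb_conv) (Eventually.of_forall fun k => hxb (φ k))
  exact hlimit

theorem stmt19 {n : ℕ} (f : EuclideanSpace ℝ (Fin n) → ℝ)
    (f' : EuclideanSpace ℝ (Fin n) → EuclideanSpace ℝ (Fin n))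
    (hgrad : ∀ x, HasGradientAt f (f' x) x)
    (Lf : ℝ) (hLf : 0 < Lf) (hlip : LipschitzWith (Real.toNNReal Lf) f')
    (g : EuclideanSpace ℝ (Fin n) → EReal)
    (hproper : ProperFn g) (hlsc : LowerSemicontinuous g)
    (γg : ℝ) (hpb : ∀ γ' ∈ Set.Ioo (0 : ℝ) γg, ProxBddBelow g γ')
    (γ : ℝ) (hγ : γ ∈ Set.Ioo (0 : ℝ) (min (1 / Lf) γg))
    (x xb r : ℕ → EuclideanSpace ℝ (Fin n))
    (hxb : ∀ k, xb k ∈ Tset f f' g γ (x k))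
    (hr : ∀ k, r k = γ⁻¹ • (x k - xb k))
    (φ : ℕ → ℕ) (hφ : StrictMono φ)
    (x' : EuclideanSpace ℝ (Fin n))
    (hconv : Filter.Tendsto (fun k => x (φ k)) Filter.atTop (nhds x'))
    (hres : Filter.Tendsto (fun k => r (φ k)) Filter.atTop (nhds 0)) :
    x' ∈ Tset f f' g γ x' :=
  stmt19_general f f' Lf hlip g hlsc γg γ hγ x xb r hxb hr φ x' hconv hres
end
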